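/- The operator Γ defined on bounded continuous functions of finitely many real variables by Γ[φ](v_1,…,v_{k+1}) = Σ_{i=1}^k [(1/2π)∫_0^{2π} φ(v_1,…, v_i cos θ − v_{k+1} sin θ, …, v_k) dθ − φ(v_1,…,v_k)] (for φ depending on k variables) is a derivation with respect to the symmetrized tensor product: Γ[f ⊗ g] = Γ[f] ⊗ g + f ⊗ Γ[g]. -/

import Mathlib

open MeasureTheory Real

/-- McKean's operator `Γ`, taking a function of `k` variables to a function of
`k+1` variables. -/
noncomputable def Gam (k : ℕ) (f : (Fin k → ℝ) → ℝ) : (Fin (k+1) → ℝ) → ℝ :=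
  fun v => ∑ i : Fin k,
    ((2 * Real.pi)⁻¹ * (∫ θ in (0:ℝ)..(2 * Real.pi),
        f (fun l => if l = i then v i.castSucc * Real.cos θ - v (Fin.last k) * Real.sin θ
                    else v l.castSucc))
      - f (fun l => v l.castSucc))

/-- The symmetrized tensor product of a function of `a` variables and a function of
`b` variables. -/
noncomputable def symProd (a b : ℕ) (f : (Fin a → ℝ) → ℝ) (g : (Fin b → ℝ) → ℝ) :
    (Fin (a + b) → ℝ) → ℝ :=
  fun v => (((a + b).factorial : ℝ))⁻¹ * ∑ σ : Equiv.Perm (Fin (a + b)),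
    f (fun i => v (σ (Fin.castAdd b i))) * g (fun j => v (σ (Fin.natAdd a j)))

/-- The symmetrization of a function of `k` variables; functions with the same
symmetrization are identified. -/
noncomputable def symmetrize (k : ℕ) (h : (Fin k → ℝ) → ℝ) : (Fin k → ℝ) → ℝ :=
  fun v => ((k.factorial : ℝ))⁻¹ * ∑ σ : Equiv.Perm (Fin k), h (fun i => v (σ i))

/-!
Write `Γ = ∑ᵢ Γᵢ`, where `Γᵢ` averages over the rotations in the plane of the `i`-th and the new
variable. Permuting the old variables permutes the `Γᵢ`, and `Γ` is linear on continuous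
functions, so `Γ[f ⊗ g]` has the same symmetrization as `Γ` applied to the plain product
`f(v₁, …, v_a) g(v_{a+1}, …, v_{a+b})`. On the plain product, `Γᵢ` only sees `f` for `i ≤ a` and
only `g` for `i > a`, so the sum splits into `Γ[f] · g` and `f · Γ[g]`, up to a relabelling of the
variables that the outer symmetrization absorbs.
-/

open Equiv

section Symmetrize

variable {k : ℕ}

lemma symmetrize_add (h₁ h₂ : (Fin k → ℝ) → ℝ) :
    symmetrize k (h₁ + h₂) = symmetrize k h₁ + symmetrize k h₂ := by
  funext v
  simp only [symmetrize, Pi.add_apply, Finset.sum_add_distrib, mul_add]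

lemma symmetrize_comp_perm (τ : Perm (Fin k)) (h : (Fin k → ℝ) → ℝ) :
    symmetrize k (fun w => h (fun i => w (τ i))) = symmetrize k h := by
  funext v
  simp only [symmetrize]
  exact congrArg _ (Equiv.sum_comp (Equiv.mulRight τ) fun σ => h fun i => v (σ i))

lemma symmetrize_average {H : Type*} [Fintype H] [Nonempty H] (e : H → Perm (Fin k))
    (h : (Fin k → ℝ) → ℝ) :
    symmetrize k (fun w => (Fintype.card H : ℝ)⁻¹ * ∑ σ, h (fun i => w (e σ i))) =
      symmetrize k h := by
  funext v
  have hcomp : ∀ σ, symmetrize k (fun w => h (fun i => w (e σ i))) v = symmetrize k h v :=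
    fun σ => congrFun (symmetrize_comp_perm (e σ) h) v
  calc symmetrize k (fun w => (Fintype.card H : ℝ)⁻¹ * ∑ σ, h (fun i => w (e σ i))) v
      = (Fintype.card H : ℝ)⁻¹ * ∑ σ, symmetrize k (fun w => h (fun i => w (e σ i))) v := by
        simp only [symmetrize, Finset.mul_sum, Finset.sum_comm (γ := H)]
        refine Finset.sum_congr rfl fun _ _ => Finset.sum_congr rfl fun _ _ => by ring
    _ = symmetrize k h v := by
        simp only [hcomp, Finset.sum_const, Finset.card_univ, nsmul_eq_mul, ← mul_assoc]
        rw [inv_mul_cancel₀ (by exact_mod_cast Fintype.card_ne_zero), one_mul]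

lemma symmetrize_symmetrize (h : (Fin k → ℝ) → ℝ) :
    symmetrize k (symmetrize k h) = symmetrize k h := by
  have h_avg := symmetrize_average (H := Perm (Fin k)) id h
  rw [Fintype.card_perm, Fintype.card_fin] at h_avg
  exact h_avg

lemma symmetrize_symmetrize_comp_cast {m : ℕ} (hkm : k = m) (h : (Fin k → ℝ) → ℝ) :
    symmetrize m (fun w => symmetrize k h (fun i => w (Fin.cast hkm i))) =
      symmetrize m (fun w => h (fun i => w (Fin.cast hkm i))) := by
  subst hkm
  simpa only [Fin.cast_eq_self] using symmetrize_symmetrize h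

end Symmetrize

section Gam

variable {k : ℕ}

noncomputable def gamTerm (k : ℕ) (h : (Fin k → ℝ) → ℝ) (i : Fin k) :
    (Fin (k + 1) → ℝ) → ℝ :=
  fun v => (2 * π)⁻¹ * (∫ θ in (0 : ℝ)..(2 * π),
      h (fun l => if l = i then v i.castSucc * cos θ - v (Fin.last k) * sin θ
                  else v l.castSucc))
    - h (fun l => v l.castSucc)

lemma Gam_apply_eq_sum_gamTerm (h : (Fin k → ℝ) → ℝ) (v : Fin (k + 1) → ℝ) :
    Gam k h v = ∑ i, gamTerm k h i v := rfl

lemma continuous_rotate_coord {h : (Fin k → ℝ) → ℝ} (hh : Continuous h) (i : Fin k)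
    (v : Fin (k + 1) → ℝ) :
    Continuous fun θ => h (fun l => if l = i then v i.castSucc * cos θ - v (Fin.last k) * sin θ
                                    else v l.castSucc) := by
  refine hh.comp (continuous_pi fun l => ?_)
  split_ifs <;> fun_prop

lemma gamTerm_symmetrize {h : (Fin k → ℝ) → ℝ} (hh : Continuous h) (i : Fin k)
    (v : Fin (k + 1) → ℝ) :
    gamTerm k (symmetrize k h) i v =
      (k.factorial : ℝ)⁻¹ * ∑ σ : Perm (Fin k), gamTerm k (fun x => h (fun l => x (σ l))) i v := by
  simp only [gamTerm, symmetrize]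
  rw [intervalIntegral.integral_const_mul, intervalIntegral.integral_finsetSum]
  · rw [Finset.sum_sub_distrib, ← Finset.mul_sum]
    ring
  · exact fun σ _ => (continuous_rotate_coord (h := fun x => h fun l => x (σ l))
      (hh.comp (by fun_prop)) i v).intervalIntegrable _ _

def permCastSucc {n : ℕ} (σ : Perm (Fin n)) : Perm (Fin (n + 1)) :=
  finSuccEquivLast.symm.permCongr (optionCongr σ)

@[simp] lemma permCastSucc_castSucc {n : ℕ} (σ : Perm (Fin n)) (i : Fin n) :
    permCastSucc σ i.castSucc = (σ i).castSucc := by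
  simp [permCastSucc, Equiv.permCongr_apply, finSuccEquivLast_castSucc]

@[simp] lemma permCastSucc_last {n : ℕ} (σ : Perm (Fin n)) :
    permCastSucc σ (Fin.last n) = Fin.last n := by
  simp [permCastSucc, Equiv.permCongr_apply, finSuccEquivLast_last]

lemma gamTerm_comp_perm (σ : Perm (Fin k)) (h : (Fin k → ℝ) → ℝ) (i : Fin k)
    (v : Fin (k + 1) → ℝ) :
    gamTerm k (fun x => h (fun l => x (σ l))) (σ i) v =
      gamTerm k h i (fun l => v (permCastSucc σ l)) := by
  simp only [gamTerm, permCastSucc_castSucc, permCastSucc_last, σ.apply_eq_iff_eq]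

lemma Gam_comp_perm (σ : Perm (Fin k)) (h : (Fin k → ℝ) → ℝ) (v : Fin (k + 1) → ℝ) :
    Gam k (fun x => h (fun l => x (σ l))) v = Gam k h (fun l => v (permCastSucc σ l)) := by
  simp only [Gam_apply_eq_sum_gamTerm, ← gamTerm_comp_perm]
  exact (Equiv.sum_comp σ _).symm

lemma symmetrize_Gam_symmetrize {h : (Fin k → ℝ) → ℝ} (hh : Continuous h) :
    symmetrize (k + 1) (Gam k (symmetrize k h)) = symmetrize (k + 1) (Gam k h) := by
  have hGam : ∀ v, Gam k (symmetrize k h) v =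
      (Fintype.card (Perm (Fin k)) : ℝ)⁻¹ * ∑ σ, Gam k h (fun l => v (permCastSucc σ l)) := by
    intro v
    simp only [Gam_apply_eq_sum_gamTerm, gamTerm_symmetrize hh, Fintype.card_perm,
      Fintype.card_fin, ← Finset.mul_sum]
    rw [Finset.sum_comm]
    simp only [← Gam_apply_eq_sum_gamTerm, Gam_comp_perm]
  rw [funext hGam]
  exact symmetrize_average permCastSucc (Gam k h)

end Gam

section Tensor

variable {a b : ℕ} {f : (Fin a → ℝ) → ℝ} {g : (Fin b → ℝ) → ℝ}

def tensor (a b : ℕ) (f : (Fin a → ℝ) → ℝ) (g : (Fin b → ℝ) → ℝ) : (Fin (a + b) → ℝ) → ℝ :=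
  fun x => f (fun i => x (Fin.castAdd b i)) * g (fun j => x (Fin.natAdd a j))

lemma symProd_eq_symmetrize_tensor (f : (Fin a → ℝ) → ℝ) (g : (Fin b → ℝ) → ℝ) :
    symProd a b f g = symmetrize (a + b) (tensor a b f g) := rfl

lemma Continuous.tensor (hf : Continuous f) (hg : Continuous g) :
    Continuous (tensor a b f g) :=
  (hf.comp (by fun_prop)).mul (hg.comp (by fun_prop))

lemma tensor_Gam_right (f : (Fin a → ℝ) → ℝ) (g : (Fin b → ℝ) → ℝ) (v : Fin (a + b + 1) → ℝ) :
    tensor a (b + 1) f (Gam b g) v = ∑ j, gamTerm (a + b) (tensor a b f g) (Fin.natAdd a j) v := by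
  rw [tensor, Gam_apply_eq_sum_gamTerm, Finset.mul_sum]
  refine Finset.sum_congr rfl fun j₀ _ => ?_
  have hf_ne : ∀ i : Fin a, (Fin.castAdd b i = Fin.natAdd a j₀) = False := fun i => by
    simp only [Fin.ext_iff, Fin.val_castAdd, Fin.val_natAdd, eq_iff_iff, iff_false]; omega
  have hg_eq : ∀ j : Fin b, (Fin.natAdd a j = Fin.natAdd a j₀) = (j = j₀) := fun j => by
    simp [Fin.ext_iff]
  have hf_idx : ∀ i : Fin a, (Fin.castAdd (b + 1) i : Fin (a + b + 1)) =
      (Fin.castAdd b i).castSucc := fun i => rfl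
  have hg_idx : ∀ j : Fin b, (Fin.natAdd a j.castSucc : Fin (a + b + 1)) =
      (Fin.natAdd a j).castSucc := fun j => rfl
  have hlast : (Fin.natAdd a (Fin.last b) : Fin (a + b + 1)) = Fin.last (a + b) := rfl
  simp only [gamTerm, tensor, hf_ne, hg_eq, if_false, hf_idx, hg_idx, hlast, mul_sub,
    intervalIntegral.integral_const_mul]
  ring

lemma cycleIcc_castSucc_castAdd (j : Fin a) :
    Fin.cycleIcc ⟨a, by omega⟩ (Fin.last (a + b)) (Fin.castAdd b j).castSucc =
      Fin.cast (Nat.add_right_comm a 1 b) (Fin.castAdd b j.castSucc) := by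
  rw [Fin.cycleIcc_of_lt (by simp [Fin.lt_def])]
  rfl

lemma cycleIcc_last :
    Fin.cycleIcc ⟨a, by omega⟩ (Fin.last (a + b)) (Fin.last (a + b)) =
      Fin.cast (Nat.add_right_comm a 1 b) (Fin.castAdd b (Fin.last a)) := by
  rw [Fin.cycleIcc_of_last (by simp [Fin.le_def])]
  rfl

lemma cycleIcc_castSucc_natAdd (j : Fin b) :
    Fin.cycleIcc ⟨a, by omega⟩ (Fin.last (a + b)) (Fin.natAdd a j).castSucc =
      Fin.cast (Nat.add_right_comm a 1 b) (Fin.natAdd (a + 1) j) := by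
  rw [Fin.cycleIcc_of_ge_of_lt (by simp [Fin.le_def]) (by simp [Fin.lt_def])]
  ext
  rw [Fin.val_add_one_of_lt (by simp [Fin.lt_def])]
  simp only [Fin.val_castSucc, Fin.val_natAdd, Fin.val_cast]
  omega

-- `cycleIcc` moves the new variable of `Γ[f]` from the end to position `a`, right after those
-- of `f`.
lemma tensor_Gam_left (f : (Fin a → ℝ) → ℝ) (g : (Fin b → ℝ) → ℝ) (v : Fin (a + b + 1) → ℝ) :
    tensor (a + 1) b (Gam a f) g (fun i => v (Fin.cast (Nat.add_right_comm a 1 b) i)) =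
      ∑ j, gamTerm (a + b) (tensor a b f g) (Fin.castAdd b j)
        (fun l => v (Fin.cycleIcc ⟨a, by omega⟩ (Fin.last (a + b)) l)) := by
  rw [tensor, Gam_apply_eq_sum_gamTerm, Finset.sum_mul]
  refine Finset.sum_congr rfl fun i₀ _ => ?_
  have hf_eq : ∀ i : Fin a, (Fin.castAdd b i = Fin.castAdd b i₀) = (i = i₀) := fun i => by
    simp [Fin.ext_iff]
  have hg_ne : ∀ j : Fin b, (Fin.natAdd a j = Fin.castAdd b i₀) = False := fun j => by
    simp only [Fin.ext_iff, Fin.val_castAdd, Fin.val_natAdd, eq_iff_iff, iff_false]; omega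
  simp only [gamTerm, tensor, hf_eq, hg_ne, if_false, cycleIcc_castSucc_castAdd, cycleIcc_last,
    cycleIcc_castSucc_natAdd, sub_mul, mul_assoc, intervalIntegral.integral_mul_const]

lemma symmetrize_symProd_Gam_left (f : (Fin a → ℝ) → ℝ) (g : (Fin b → ℝ) → ℝ) :
    symmetrize (a + b + 1) (fun w => symProd (a + 1) b (Gam a f) g
        (fun i => w (Fin.cast (Nat.add_right_comm a 1 b) i))) =
      symmetrize (a + b + 1)
        (fun v => ∑ j, gamTerm (a + b) (tensor a b f g) (Fin.castAdd b j) v) := by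
  rw [symProd_eq_symmetrize_tensor, symmetrize_symmetrize_comp_cast,
    ← symmetrize_comp_perm (Fin.cycleIcc ⟨a, by omega⟩ (Fin.last (a + b)))
      (fun v => ∑ j, gamTerm (a + b) (tensor a b f g) (Fin.castAdd b j) v)]
  simp only [tensor_Gam_left]

lemma symmetrize_symProd_Gam_right (f : (Fin a → ℝ) → ℝ) (g : (Fin b → ℝ) → ℝ) :
    symmetrize (a + b + 1) (symProd a (b + 1) f (Gam b g)) =
      symmetrize (a + b + 1) (fun v => ∑ j, gamTerm (a + b) (tensor a b f g) (Fin.natAdd a j) v) :=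
  calc _ = symmetrize (a + b + 1) (tensor a (b + 1) f (Gam b g)) := symmetrize_symmetrize _
    _ = _ := congrArg _ (funext (tensor_Gam_right f g))

end Tensor

/-- `Γ` is a derivation with respect to the symmetrized tensor product:
`Γ[f ⊗ g] = Γ[f] ⊗ g + f ⊗ Γ[g]` (as identified, i.e. symmetrized, functions). -/
theorem stmt19 (a b : ℕ) (f : (Fin a → ℝ) → ℝ) (g : (Fin b → ℝ) → ℝ)
    (hf : Continuous f) (hg : Continuous g) :
    symmetrize (a + b + 1) (Gam (a + b) (symProd a b f g)) =
      fun v : Fin (a + b + 1) → ℝ =>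
        symmetrize (a + b + 1)
          (fun w => symProd (a + 1) b (Gam a f) g
            (fun i : Fin (a + 1 + b) => w (Fin.cast (by omega) i))) v
        + symmetrize (a + b + 1) (symProd a (b + 1) f (Gam b g)) v := by
  have hsplit : Gam (a + b) (tensor a b f g) =
      (fun v => ∑ j, gamTerm (a + b) (tensor a b f g) (Fin.castAdd b j) v) +
        fun v => ∑ j, gamTerm (a + b) (tensor a b f g) (Fin.natAdd a j) v :=
    funext fun v => Fin.sum_univ_add _
  rw [symProd_eq_symmetrize_tensor, symmetrize_Gam_symmetrize (hf.tensor hg), hsplit,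
    symmetrize_add, symmetrize_symProd_Gam_left, symmetrize_symProd_Gam_right]
  rfl
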